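/- arXiv:2202.07314 — 2 statements merged into one kernel-verified Lean document; each statement's English description precedes it below -/
import Mathlib

section
/- Let 1 ≤ p, q ≤ ∞ and s ∈ [0,2] be such that either (p,q,s) = (1,∞,0), or p > 1 and 1/q + 1 = 1/p + s/2. Then there is a constant C = C(p) > 0 such that for every measurable f : (0,∞) → ℂ one has ‖ r ↦ r^{-s} ∫₀^r f(r') r' dr' ‖_{L^q} ≤ C ‖f‖_{L^p}. -/
open MeasureTheory Set
open scoped ENNReal

/-- The measure `2π r dr` on `(0,∞)`. -/
noncomputable def rmeas : Measure ℝ :=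
  (volume.restrict (Set.Ioi (0:ℝ))).withDensity (fun r => ENNReal.ofReal (2 * Real.pi * r))

/-!
Write `Φ(r) = ∫₀^r t |f t| dt`, so that `|r^{-s} ∫₀^r t f(t) dt| ≤ r^{-s} Φ(r)`. Now `2π Φ(r)` is
the integral of `|f|` over `(0,r]` against `2πr dr`, a set of measure `π r²`, so Hölder's inequality
gives `r^{-2(1-1/p)} Φ(r) ≤ C ‖f‖_p` for every `p ≥ 1`; this is the case `q = ∞`.
For `1 < p ≤ q < ∞` the exponent relation splits
`(r^{-s} Φ)^q = (r^{-2} Φ)^p · (r^{-2(1-1/p)} Φ)^{q-p}`: the second factor is bounded by the case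
`q = ∞`, and the integral of the first is a weighted Hardy inequality. For the latter, Hölder on
`(0,r]` gives `Φ(r)^p ≤ r^{p-1} ∫₀^r t^p |f|^p dt`, and Tonelli reduces everything to
`∫_t^∞ r^{-p} dr = t^{1-p}/(p-1)`.
-/

open Real

lemma Complex.enorm_ofReal_eq (x : ℝ) : ‖(x : ℂ)‖ₑ = ‖x‖ₑ := by
  rw [enorm_eq_nnnorm, Complex.nnnorm_real, enorm_eq_nnnorm]

lemma ENNReal.ofReal_rpow_mul_ofReal_rpow {r : ℝ} (hr : 0 < r) (x y : ℝ) :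
    ENNReal.ofReal (r ^ x) * ENNReal.ofReal (r ^ y) = ENNReal.ofReal (r ^ (x + y)) := by
  rw [← ENNReal.ofReal_mul (by positivity), Real.rpow_add hr]

lemma ENNReal.ofReal_rpow_rpow {r : ℝ} (hr : 0 < r) (x y : ℝ) :
    ENNReal.ofReal (r ^ x) ^ y = ENNReal.ofReal (r ^ (x * y)) := by
  rw [ENNReal.ofReal_rpow_of_pos (by positivity), Real.rpow_mul hr.le]

lemma ENNReal.one_lt_toReal {p : ℝ≥0∞} (hp : 1 < p) (hp_top : p ≠ ∞) : 1 < p.toReal := by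
  simpa using ENNReal.toReal_strict_mono hp_top hp

lemma lintegral_enorm_rpow_eq_eLpNorm_rpow {α E : Type*} [MeasurableSpace α]
    [NormedAddCommGroup E] {μ : Measure α} {f : α → E} {p : ℝ≥0∞} (hp0 : p ≠ 0) (hp_top : p ≠ ∞) :
    ∫⁻ a, ‖f a‖ₑ ^ p.toReal ∂μ = eLpNorm f p μ ^ p.toReal := by
  rw [eLpNorm_eq_eLpNorm' hp0 hp_top, lintegral_rpow_enorm_eq_rpow_eLpNorm'
    (ENNReal.toReal_pos hp0 hp_top)]

lemma lintegral_rpow_le_measure_univ_rpow_mul {α : Type*} [MeasurableSpace α] {μ : Measure α}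
    {F : α → ℝ≥0∞} (hF : AEMeasurable F μ) {P : ℝ} (hP : 1 ≤ P) :
    (∫⁻ a, F a ∂μ) ^ P ≤ μ univ ^ (P - 1) * ∫⁻ a, F a ^ P ∂μ := by
  have hP0 : 0 < P := by linarith
  have holder := ENNReal.lintegral_mul_norm_pow_le (hF.pow_const P) aemeasurable_const
    (inv_nonneg.2 hP0.le) (sub_nonneg.2 (inv_le_one_of_one_le₀ hP)) (add_sub_cancel _ 1)
    (g := fun _ => 1)
  simp only [ENNReal.one_rpow, mul_one, lintegral_const, one_mul,
    ENNReal.rpow_rpow_inv hP0.ne'] at holder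
  calc (∫⁻ a, F a ∂μ) ^ P
      ≤ ((∫⁻ a, F a ^ P ∂μ) ^ P⁻¹ * μ univ ^ (1 - P⁻¹)) ^ P := by gcongr
    _ = μ univ ^ (P - 1) * ∫⁻ a, F a ^ P ∂μ := by
        rw [ENNReal.mul_rpow_of_nonneg _ _ hP0.le, ENNReal.rpow_inv_rpow hP0.ne',
          ← ENNReal.rpow_mul, sub_mul, inv_mul_cancel₀ hP0.ne', one_mul, mul_comm]

lemma lintegral_mul_setLIntegral_Iic_comm {α : Type*} [LinearOrder α] [TopologicalSpace α]
    [OrderClosedTopology α] [SecondCountableTopology α] [MeasurableSpace α]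
    [OpensMeasurableSpace α] {μ : Measure α} [SFinite μ] {g h : α → ℝ≥0∞}
    (hg : Measurable g) (hh : Measurable h) :
    ∫⁻ x, g x * ∫⁻ y in Iic x, h y ∂μ ∂μ = ∫⁻ y, h y * ∫⁻ x in Ici y, g x ∂μ ∂μ := by
  let F : α → α → ℝ≥0∞ := fun x y =>
    {z : α × α | z.2 ≤ z.1}.indicator (fun z => g z.1 * h z.2) (x, y)
  have hF : Measurable (Function.uncurry F) :=
    Measurable.indicator (by fun_prop) (measurableSet_le measurable_snd measurable_fst)
  have hx : ∀ x, g x * ∫⁻ y in Iic x, h y ∂μ = ∫⁻ y, F x y ∂μ := fun x => by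
    rw [← lintegral_const_mul _ hh, ← lintegral_indicator measurableSet_Iic]
    rfl
  have hy : ∀ y, h y * ∫⁻ x in Ici y, g x ∂μ = ∫⁻ x, F x y ∂μ := fun y => by
    rw [← lintegral_const_mul _ hg, ← lintegral_indicator measurableSet_Ici]
    simp_rw [F, indicator, mul_comm (h y)]
    rfl
  simp_rw [hx, hy]
  exact lintegral_lintegral_swap hF.aemeasurable

lemma setLIntegral_Ioi_mul_setLIntegral_Ioc_comm {g h : ℝ → ℝ≥0∞} (hg : Measurable g)
    (hh : Measurable h) :
    ∫⁻ r in Ioi 0, g r * ∫⁻ t in Ioc 0 r, h t = ∫⁻ t in Ioi 0, h t * ∫⁻ r in Ici t, g r := by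
  have := lintegral_mul_setLIntegral_Iic_comm (μ := volume.restrict (Ioi (0 : ℝ))) hg hh
  simp only [Measure.restrict_restrict measurableSet_Iic, Measure.restrict_restrict
    measurableSet_Ici, inter_comm _ (Ioi _), Ioi_inter_Iic] at this
  rw [this]
  refine setLIntegral_congr_fun measurableSet_Ioi fun t (ht : 0 < t) => ?_
  rw [inter_eq_right.2 (Ici_subset_Ioi.2 ht)]

lemma lintegral_Ici_rpow_neg {P : ℝ} (hP : 1 < P) {t : ℝ} (ht : 0 < t) :
    ∫⁻ r in Ici t, ENNReal.ofReal (r ^ (-P)) = ENNReal.ofReal (t ^ (1 - P) / (P - 1)) := by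
  rw [← Measure.restrict_congr_set Ioi_ae_eq_Ici, ← ofReal_integral_eq_lintegral_ofReal
    (integrableOn_Ioi_rpow_of_lt (by linarith) ht)
    ((ae_restrict_mem measurableSet_Ioi).mono fun r hr => by have := ht.trans hr; positivity),
    integral_Ioi_rpow_of_lt (by linarith) ht, neg_div, ← div_neg]
  ring_nf

lemma lintegral_rmeas (g : ℝ → ℝ≥0∞) :
    ∫⁻ r, g r ∂rmeas = ∫⁻ r in Ioi 0, ENNReal.ofReal (2 * π * r) * g r :=
  lintegral_withDensity_eq_lintegral_mul_non_measurable _ (by fun_prop)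
    (.of_forall fun _ => ENNReal.ofReal_lt_top) g

lemma setLIntegral_rmeas (g : ℝ → ℝ≥0∞) {s : Set ℝ} (hs : MeasurableSet s) :
    ∫⁻ r in s, g r ∂rmeas = ∫⁻ r in Ioi 0 ∩ s, ENNReal.ofReal (2 * π * r) * g r := by
  rw [rmeas, restrict_withDensity hs, Measure.restrict_restrict hs, inter_comm,
    lintegral_withDensity_eq_lintegral_mul_non_measurable _ (by fun_prop)
      (.of_forall fun _ => ENNReal.ofReal_lt_top)]
  rfl

lemma ae_rmeas_pos : ∀ᵐ r ∂rmeas, 0 < r :=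
  (withDensity_absolutelyContinuous _ _).ae_le (ae_restrict_mem measurableSet_Ioi)

lemma rmeas_Iic {r : ℝ} (hr : 0 ≤ r) : rmeas (Iic r) = ENNReal.ofReal (π * r ^ 2) := by
  rw [← setLIntegral_one, setLIntegral_rmeas _ measurableSet_Iic, Ioi_inter_Iic]
  simp only [mul_one]
  rw [← ofReal_integral_eq_lintegral_ofReal
    (by fun_prop : Continuous fun t : ℝ => 2 * π * t).integrableOn_Ioc
    ((ae_restrict_mem measurableSet_Ioc).mono fun t ht => by have := ht.1.le; positivity),
    ← intervalIntegral.integral_of_le hr, intervalIntegral.integral_const_mul, integral_id]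
  ring_nf

noncomputable def radialPrimitive (φ : ℝ → ℝ≥0∞) (r : ℝ) : ℝ≥0∞ :=
  ∫⁻ t in Ioc 0 r, ENNReal.ofReal t * φ t

noncomputable def hardyOp (s : ℝ) (f : ℝ → ℂ) (r : ℝ) : ℂ :=
  ((r ^ (-s) : ℝ) : ℂ) * ∫ t in (0:ℝ)..r, (t : ℂ) * f t

lemma monotone_radialPrimitive (φ : ℝ → ℝ≥0∞) : Monotone (radialPrimitive φ) :=
  fun _ _ hab => lintegral_mono_set (Ioc_subset_Ioc_right hab)

lemma enorm_hardyOp_le (s : ℝ) (f : ℝ → ℂ) {r : ℝ} (hr : 0 ≤ r) :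
    ‖hardyOp s f r‖ₑ ≤ ENNReal.ofReal (r ^ (-s)) * radialPrimitive (‖f ·‖ₑ) r := by
  rw [hardyOp, enorm_mul, Complex.enorm_ofReal_eq, Real.enorm_of_nonneg (by positivity),
    intervalIntegral.integral_of_le hr]
  gcongr
  refine (enorm_integral_le_lintegral_enorm _).trans_eq ?_
  refine setLIntegral_congr_fun measurableSet_Ioc fun t ht => ?_
  rw [enorm_mul, Complex.enorm_ofReal_eq, Real.enorm_of_nonneg ht.1.le]

lemma ofReal_two_pi_mul_radialPrimitive (φ : ℝ → ℝ≥0∞) (r : ℝ) :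
    ENNReal.ofReal (2 * π) * radialPrimitive φ r = ∫⁻ t in Iic r, φ t ∂rmeas := by
  rw [setLIntegral_rmeas _ measurableSet_Iic, Ioi_inter_Iic, radialPrimitive,
    ← lintegral_const_mul' _ _ ENNReal.ofReal_ne_top]
  refine setLIntegral_congr_fun measurableSet_Ioc fun t ht => ?_
  rw [← mul_assoc, ← ENNReal.ofReal_mul (by positivity), mul_assoc]

-- For `p = ∞` the exponent `1 - p.toReal⁻¹` is `1`, since `∞.toReal⁻¹ = 0⁻¹ = 0`.
lemma ofReal_two_pi_mul_radialPrimitive_le {p : ℝ≥0∞} (hp : 1 ≤ p) {f : ℝ → ℂ}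
    (hf : AEStronglyMeasurable f rmeas) {r : ℝ} (hr : 0 ≤ r) :
    ENNReal.ofReal (2 * π) * radialPrimitive (‖f ·‖ₑ) r
      ≤ eLpNorm f p rmeas * ENNReal.ofReal (π * r ^ 2) ^ (1 - p.toReal⁻¹) := by
  rw [ofReal_two_pi_mul_radialPrimitive, ← eLpNorm_one_eq_lintegral_enorm (f := f),
    ← rmeas_Iic hr, ← Measure.restrict_apply_univ]
  refine (eLpNorm_le_eLpNorm_mul_rpow_measure_univ (f := f) hp hf.restrict).trans ?_
  rw [ENNReal.toReal_one, one_div_one, one_div]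
  gcongr
  exact Measure.restrict_le_self

lemma rpow_mul_radialPrimitive_le_eLpNorm {p : ℝ≥0∞} (hp : 1 ≤ p) {f : ℝ → ℂ}
    (hf : AEStronglyMeasurable f rmeas) {r : ℝ} (hr : 0 < r) :
    ENNReal.ofReal (r ^ (-(2 * (1 - p.toReal⁻¹)))) * radialPrimitive (‖f ·‖ₑ) r
      ≤ ENNReal.ofReal ((2 * π)⁻¹ * π ^ (1 - p.toReal⁻¹)) * eLpNorm f p rmeas := by
  set a := 1 - p.toReal⁻¹
  have hscale : ENNReal.ofReal (r ^ (-(2 * a))) * ENNReal.ofReal (π * r ^ 2) ^ a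
      = ENNReal.ofReal (π ^ a) := by
    rw [ENNReal.ofReal_rpow_of_pos (by positivity), ← ENNReal.ofReal_mul (by positivity),
      Real.mul_rpow pi_pos.le (by positivity), ← Real.rpow_natCast, ← Real.rpow_mul hr.le,
      mul_left_comm, ← Real.rpow_add hr]
    norm_num
  have hinv : ENNReal.ofReal (2 * π)⁻¹ * ENNReal.ofReal (2 * π) = 1 := by
    rw [← ENNReal.ofReal_mul (by positivity), inv_mul_cancel₀ (by positivity), ENNReal.ofReal_one]
  calc ENNReal.ofReal (r ^ (-(2 * a))) * radialPrimitive (‖f ·‖ₑ) r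
      = ENNReal.ofReal (2 * π)⁻¹ * ENNReal.ofReal (r ^ (-(2 * a)))
          * (ENNReal.ofReal (2 * π) * radialPrimitive (‖f ·‖ₑ) r) := by
        rw [mul_mul_mul_comm, hinv, one_mul]
    _ ≤ ENNReal.ofReal (2 * π)⁻¹ * ENNReal.ofReal (r ^ (-(2 * a)))
          * (eLpNorm f p rmeas * ENNReal.ofReal (π * r ^ 2) ^ a) :=
        mul_le_mul_right (ofReal_two_pi_mul_radialPrimitive_le hp hf hr.le) _
    _ = ENNReal.ofReal ((2 * π)⁻¹ * π ^ a) * eLpNorm f p rmeas := by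
        rw [ENNReal.ofReal_mul (inv_nonneg.2 two_pi_pos.le), ← hscale]
        ring

lemma radialPrimitive_rpow_le {φ : ℝ → ℝ≥0∞} (hφ : Measurable φ) {P : ℝ} (hP : 1 ≤ P)
    {r : ℝ} (hr : 0 ≤ r) :
    radialPrimitive φ r ^ P
      ≤ ENNReal.ofReal (r ^ (P - 1)) * ∫⁻ t in Ioc 0 r, ENNReal.ofReal (t ^ P) * φ t ^ P := by
  have hP0 : 0 ≤ P := by linarith
  refine (lintegral_rpow_le_measure_univ_rpow_mul (by fun_prop) hP).trans_eq ?_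
  rw [Measure.restrict_apply_univ, Real.volume_Ioc, sub_zero,
    ENNReal.ofReal_rpow_of_nonneg hr (by linarith)]
  congr 1
  refine setLIntegral_congr_fun measurableSet_Ioc fun t ht => ?_
  rw [ENNReal.mul_rpow_of_nonneg _ _ hP0, ENNReal.ofReal_rpow_of_nonneg ht.1.le hP0]

lemma ofReal_mul_rpow_radialPrimitive_le {φ : ℝ → ℝ≥0∞} (hφ : Measurable φ) {P : ℝ}
    (hP : 1 ≤ P) {r : ℝ} (hr : 0 < r) :
    ENNReal.ofReal (2 * π * r) * (ENNReal.ofReal (r ^ (-2 : ℝ)) * radialPrimitive φ r) ^ P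
      ≤ ENNReal.ofReal (2 * π) * (ENNReal.ofReal (r ^ (-P))
          * ∫⁻ t in Ioc 0 r, ENNReal.ofReal (t ^ P) * φ t ^ P) := by
  calc _ = ENNReal.ofReal (2 * π) * ENNReal.ofReal (r ^ (1 + -2 * P))
          * radialPrimitive φ r ^ P := by
        rw [ENNReal.mul_rpow_of_nonneg _ _ (by linarith), ENNReal.ofReal_rpow_rpow hr,
          ← ENNReal.ofReal_rpow_mul_ofReal_rpow hr, Real.rpow_one,
          ENNReal.ofReal_mul (by positivity)]
        ring
    _ ≤ ENNReal.ofReal (2 * π) * ENNReal.ofReal (r ^ (1 + -2 * P))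
          * (ENNReal.ofReal (r ^ (P - 1)) * ∫⁻ t in Ioc 0 r, ENNReal.ofReal (t ^ P) * φ t ^ P) :=
        mul_le_mul_right (radialPrimitive_rpow_le hφ hP hr.le) _
    _ = _ := by
        rw [mul_assoc, ← mul_assoc (ENNReal.ofReal (r ^ (1 + -2 * P))),
          ENNReal.ofReal_rpow_mul_ofReal_rpow hr]
        ring_nf

lemma lintegral_rpow_radialPrimitive_le {P : ℝ} (hP : 1 < P) {φ : ℝ → ℝ≥0∞}
    (hφ : Measurable φ) :
    ∫⁻ r, (ENNReal.ofReal (r ^ (-2 : ℝ)) * radialPrimitive φ r) ^ P ∂rmeas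
      ≤ ENNReal.ofReal (P - 1)⁻¹ * ∫⁻ t, φ t ^ P ∂rmeas := by
  have hinner : ∀ t ∈ Ioi (0 : ℝ), ENNReal.ofReal (2 * π)
      * (ENNReal.ofReal (t ^ P) * φ t ^ P * ∫⁻ r in Ici t, ENNReal.ofReal (r ^ (-P)))
      = ENNReal.ofReal (P - 1)⁻¹ * (ENNReal.ofReal (2 * π * t) * φ t ^ P) := by
    intro t (ht : 0 < t)
    have hweight : ENNReal.ofReal (2 * π) * ENNReal.ofReal (t ^ P)
        * ENNReal.ofReal (t ^ (1 - P) / (P - 1))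
        = ENNReal.ofReal (P - 1)⁻¹ * ENNReal.ofReal (2 * π * t) := by
      rw [← ENNReal.ofReal_mul (by positivity), ← ENNReal.ofReal_mul (by positivity),
        ← ENNReal.ofReal_mul (inv_nonneg.2 (by linarith))]
      congr 1
      rw [mul_div_assoc', mul_assoc, ← Real.rpow_add ht, add_sub_cancel, Real.rpow_one]
      ring
    rw [lintegral_Ici_rpow_neg hP ht]
    calc _ = ENNReal.ofReal (2 * π) * ENNReal.ofReal (t ^ P)
          * ENNReal.ofReal (t ^ (1 - P) / (P - 1)) * φ t ^ P := by ring
      _ = _ := by rw [hweight]; ring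
  rw [lintegral_rmeas, lintegral_rmeas]
  calc _ ≤ ∫⁻ r in Ioi 0, ENNReal.ofReal (2 * π) * (ENNReal.ofReal (r ^ (-P))
          * ∫⁻ t in Ioc 0 r, ENNReal.ofReal (t ^ P) * φ t ^ P) :=
        setLIntegral_mono' measurableSet_Ioi fun r hr =>
          ofReal_mul_rpow_radialPrimitive_le hφ hP.le hr
    _ = ∫⁻ t in Ioi 0, ENNReal.ofReal (2 * π)
          * (ENNReal.ofReal (t ^ P) * φ t ^ P * ∫⁻ r in Ici t, ENNReal.ofReal (r ^ (-P))) := by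
        rw [lintegral_const_mul' _ _ ENNReal.ofReal_ne_top,
          setLIntegral_Ioi_mul_setLIntegral_Ioc_comm (by fun_prop) (by fun_prop),
          lintegral_const_mul' _ _ ENNReal.ofReal_ne_top]
    _ = _ := by
        rw [setLIntegral_congr_fun measurableSet_Ioi hinner,
          lintegral_const_mul' _ _ ENNReal.ofReal_ne_top]

lemma ofReal_rpow_neg_mul_rpow_eq {r : ℝ} (hr : 0 < r) (x : ℝ≥0∞) {s b c P Q : ℝ}
    (hP : 0 ≤ P) (hPQ : P ≤ Q) (h : s * Q = b * P + c * (Q - P)) :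
    (ENNReal.ofReal (r ^ (-s)) * x) ^ Q
      = (ENNReal.ofReal (r ^ (-b)) * x) ^ P * (ENNReal.ofReal (r ^ (-c)) * x) ^ (Q - P) := by
  have hQP : 0 ≤ Q - P := sub_nonneg.2 hPQ
  rw [ENNReal.mul_rpow_of_nonneg _ _ (hP.trans hPQ), ENNReal.mul_rpow_of_nonneg _ _ hP,
    ENNReal.mul_rpow_of_nonneg _ _ hQP, ENNReal.ofReal_rpow_rpow hr, ENNReal.ofReal_rpow_rpow hr,
    ENNReal.ofReal_rpow_rpow hr, mul_mul_mul_comm, ENNReal.ofReal_rpow_mul_ofReal_rpow hr,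
    ← ENNReal.rpow_add_of_nonneg _ _ hP hQP, add_sub_cancel]
  congr 3
  linarith

lemma enorm_hardyOp_rpow_le {p : ℝ≥0∞} (hp : 1 ≤ p) {f : ℝ → ℂ}
    (hf : AEStronglyMeasurable f rmeas) {s Q : ℝ} (hPQ : p.toReal ≤ Q)
    (hsQ : s * Q = 2 * p.toReal + 2 * (1 - p.toReal⁻¹) * (Q - p.toReal)) {r : ℝ} (hr : 0 < r) :
    ‖hardyOp s f r‖ₑ ^ Q
      ≤ (ENNReal.ofReal (r ^ (-2 : ℝ)) * radialPrimitive (‖f ·‖ₑ) r) ^ p.toReal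
        * (ENNReal.ofReal ((2 * π)⁻¹ * π ^ (1 - p.toReal⁻¹)) * eLpNorm f p rmeas)
          ^ (Q - p.toReal) := by
  calc ‖hardyOp s f r‖ₑ ^ Q
      ≤ (ENNReal.ofReal (r ^ (-s)) * radialPrimitive (‖f ·‖ₑ) r) ^ Q :=
        ENNReal.rpow_le_rpow (enorm_hardyOp_le s f hr.le) (ENNReal.toReal_nonneg.trans hPQ)
    _ = (ENNReal.ofReal (r ^ (-2 : ℝ)) * radialPrimitive (‖f ·‖ₑ) r) ^ p.toReal
          * (ENNReal.ofReal (r ^ (-(2 * (1 - p.toReal⁻¹)))) * radialPrimitive (‖f ·‖ₑ) r)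
            ^ (Q - p.toReal) :=
        ofReal_rpow_neg_mul_rpow_eq hr _ ENNReal.toReal_nonneg hPQ hsQ
    _ ≤ _ := mul_le_mul_right (ENNReal.rpow_le_rpow
          (rpow_mul_radialPrimitive_le_eLpNorm hp hf hr) (sub_nonneg.2 hPQ)) _

lemma eLpNorm_top_hardyOp_le {p : ℝ≥0∞} (hp : 1 ≤ p) {f : ℝ → ℂ}
    (hf : AEStronglyMeasurable f rmeas) :
    eLpNorm (hardyOp (2 * (1 - p.toReal⁻¹)) f) ∞ rmeas
      ≤ ENNReal.ofReal ((2 * π)⁻¹ * π ^ (1 - p.toReal⁻¹)) * eLpNorm f p rmeas := by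
  rw [eLpNorm_exponent_top]
  refine eLpNormEssSup_le_of_ae_enorm_bound ?_
  filter_upwards [ae_rmeas_pos] with r hr
  exact (enorm_hardyOp_le _ f hr.le).trans (rpow_mul_radialPrimitive_le_eLpNorm hp hf hr)

lemma lintegral_enorm_hardyOp_rpow_le {p : ℝ≥0∞} (hp : 1 < p) (hp_top : p ≠ ∞) {f : ℝ → ℂ}
    (hf : Measurable f) {s Q : ℝ} (hPQ : p.toReal ≤ Q)
    (hsQ : s * Q = 2 * p.toReal + 2 * (1 - p.toReal⁻¹) * (Q - p.toReal)) :
    ∫⁻ r, ‖hardyOp s f r‖ₑ ^ Q ∂rmeas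
      ≤ ENNReal.ofReal ((2 * π)⁻¹ * π ^ (1 - p.toReal⁻¹)) ^ (Q - p.toReal)
        * ENNReal.ofReal (p.toReal - 1)⁻¹ * eLpNorm f p rmeas ^ Q := by
  set P := p.toReal
  set A := (2 * π)⁻¹ * π ^ (1 - P⁻¹)
  set N := eLpNorm f p rmeas
  have hP : 1 < P := ENNReal.one_lt_toReal hp hp_top
  have hQP : 0 ≤ Q - P := sub_nonneg.2 hPQ
  have hmeas : Measurable fun r : ℝ =>
      (ENNReal.ofReal (r ^ (-2 : ℝ)) * radialPrimitive (‖f ·‖ₑ) r) ^ P :=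
    ((by fun_prop : Measurable fun r : ℝ => ENNReal.ofReal (r ^ (-2 : ℝ))).mul
      (monotone_radialPrimitive _).measurable).pow_const P
  calc _ ≤ ∫⁻ r, (ENNReal.ofReal (r ^ (-2 : ℝ)) * radialPrimitive (‖f ·‖ₑ) r) ^ P
        * (ENNReal.ofReal A * N) ^ (Q - P) ∂rmeas := by
        refine lintegral_mono_ae ?_
        filter_upwards [ae_rmeas_pos] with r hr
        exact enorm_hardyOp_rpow_le hp.le hf.aestronglyMeasurable hPQ hsQ hr
    _ ≤ (ENNReal.ofReal (P - 1)⁻¹ * N ^ P) * (ENNReal.ofReal A * N) ^ (Q - P) := by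
        rw [lintegral_mul_const _ hmeas,
          ← lintegral_enorm_rpow_eq_eLpNorm_rpow (zero_lt_one.trans hp).ne' hp_top]
        gcongr
        exact lintegral_rpow_radialPrimitive_le hP (by fun_prop)
    _ = _ := by
        have hNQ : N ^ Q = N ^ (Q - P) * N ^ P := by
          rw [← ENNReal.rpow_add_of_nonneg _ _ hQP (by linarith), sub_add_cancel]
        rw [hNQ, ENNReal.mul_rpow_of_nonneg _ _ hQP]
        ring

lemma eLpNorm_hardyOp_le {p q : ℝ≥0∞} {s : ℝ} (hp : 1 < p) (hp_top : p ≠ ∞) (hq0 : q ≠ 0)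
    (hq_top : q ≠ ∞) (hs : s ≤ 2) (hrel : q.toReal⁻¹ + 1 = p.toReal⁻¹ + s / 2) {f : ℝ → ℂ}
    (hf : Measurable f) :
    eLpNorm (hardyOp s f) q rmeas
      ≤ ENNReal.ofReal ((((2 * π)⁻¹ * π ^ (1 - p.toReal⁻¹)) ^ (q.toReal - p.toReal)
          * (p.toReal - 1)⁻¹) ^ q.toReal⁻¹) * eLpNorm f p rmeas := by
  set P := p.toReal
  set Q := q.toReal
  have hP : 1 < P := ENNReal.one_lt_toReal hp hp_top
  have hQ : 0 < Q := ENNReal.toReal_pos hq0 hq_top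
  have hPQ : P ≤ Q := by
    rw [← inv_le_inv₀ hQ (by linarith)]
    linarith
  have hsQ : s * Q = 2 * P + 2 * (1 - P⁻¹) * (Q - P) := by
    field_simp at hrel ⊢
    linear_combination -hrel
  rw [eLpNorm_eq_lintegral_rpow_enorm_toReal hq0 hq_top, one_div]
  calc _ ≤ (ENNReal.ofReal ((2 * π)⁻¹ * π ^ (1 - P⁻¹)) ^ (Q - P) * ENNReal.ofReal (P - 1)⁻¹
        * eLpNorm f p rmeas ^ Q) ^ Q⁻¹ := by
        gcongr
        exact lintegral_enorm_hardyOp_rpow_le hp hp_top hf hPQ hsQ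
    _ = _ := by
        rw [ENNReal.mul_rpow_of_nonneg _ _ (by positivity), ENNReal.rpow_rpow_inv hQ.ne',
          ENNReal.ofReal_rpow_of_pos (by positivity), ← ENNReal.ofReal_mul (by positivity),
          ENNReal.ofReal_rpow_of_pos (mul_pos (by positivity) (inv_pos.2 (by linarith)))]

lemma toReal_inv_add_one_eq {p q : ℝ≥0∞} {s : ℝ} (hs : 0 ≤ s) (hp0 : p ≠ 0) (hq0 : q ≠ 0)
    (h : 1 / q + 1 = 1 / p + ENNReal.ofReal (s / 2)) :
    q.toReal⁻¹ + 1 = p.toReal⁻¹ + s / 2 := by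
  have := congrArg ENNReal.toReal h
  rwa [ENNReal.toReal_add (by simpa) ENNReal.one_ne_top,
    ENNReal.toReal_add (by simpa) ENNReal.ofReal_ne_top, one_div, one_div, ENNReal.toReal_inv,
    ENNReal.toReal_inv, ENNReal.toReal_one, ENNReal.toReal_ofReal (by linarith)] at this

theorem integral_operator_bound_general (p q : ℝ≥0∞) (s : ℝ)
    (hq : 1 ≤ q) (hs0 : 0 ≤ s) (hs2 : s ≤ 2)
    (hcond : (p = 1 ∧ q = ∞ ∧ s = 0) ∨
      (1 < p ∧ 1 / q + 1 = 1 / p + ENNReal.ofReal (s / 2))) :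
    ∃ C : ℝ, 0 < C ∧ ∀ f : ℝ → ℂ, Measurable f →
      eLpNorm (fun r : ℝ => ((r ^ (-s) : ℝ) : ℂ) * ∫ t in (0:ℝ)..r, (t : ℂ) * f t) q rmeas
        ≤ ENNReal.ofReal C * eLpNorm f p rmeas := by
  have hp : 1 ≤ p := by
    rcases hcond with ⟨rfl, -⟩ | ⟨h, -⟩
    exacts [le_rfl, h.le]
  have hq0 : q ≠ 0 := (zero_lt_one.trans_le hq).ne'
  have hrel : q.toReal⁻¹ + 1 = p.toReal⁻¹ + s / 2 := by
    rcases hcond with ⟨rfl, rfl, rfl⟩ | ⟨-, h⟩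
    · norm_num
    · exact toReal_inv_add_one_eq hs0 (zero_lt_one.trans_le hp).ne' hq0 h
  rcases eq_or_ne q ∞ with rfl | hq_top
  · obtain rfl : s = 2 * (1 - p.toReal⁻¹) := by
      rw [ENNReal.toReal_top, inv_zero] at hrel
      linarith
    exact ⟨_, by positivity, fun f hf => eLpNorm_top_hardyOp_le hp hf.aestronglyMeasurable⟩
  obtain ⟨hp1, -⟩ := hcond.resolve_left fun h => hq_top h.2.1
  have hp_top : p ≠ ∞ := by
    rintro rfl
    have := inv_pos.2 (ENNReal.toReal_pos hq0 hq_top)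
    rw [ENNReal.toReal_top, inv_zero] at hrel
    linarith
  have hP : 1 < p.toReal := ENNReal.one_lt_toReal hp1 hp_top
  exact ⟨_, Real.rpow_pos_of_pos (mul_pos (by positivity) (inv_pos.2 (sub_pos.2 hP))) _,
    fun f hf => eLpNorm_hardyOp_le hp1 hp_top hq0 hq_top hs2 hrel hf⟩

/-- Mapping properties for the integral operator `f ↦ r^{-s} ∫₀^r f(r') r' dr'`. -/
theorem integral_operator_bound (p q : ℝ≥0∞) (s : ℝ)
    (hp : 1 ≤ p) (hq : 1 ≤ q) (hs0 : 0 ≤ s) (hs2 : s ≤ 2)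
    (hcond : (p = 1 ∧ q = ∞ ∧ s = 0) ∨
      (1 < p ∧ 1 / q + 1 = 1 / p + ENNReal.ofReal (s / 2))) :
    ∃ C : ℝ, 0 < C ∧ ∀ f : ℝ → ℂ, Measurable f →
      eLpNorm (fun r : ℝ => ((r ^ (-s) : ℝ) : ℂ) * ∫ t in (0:ℝ)..r, (t : ℂ) * f t) q rmeas
        ≤ ENNReal.ofReal C * eLpNorm f p rmeas :=
  integral_operator_bound_general p q s hq hs0 hs2 hcond
end

section
/- Let w₁₂, w₃₄, w₅₆ : (0,∞) → (0,∞) be decreasing functions with w₁₂(r)·w₃₄(r)·w₅₆(r) = r^{-2} for all r > 0. Then there is an absolute constant C > 0 such that for all measurable ψ₁, …, ψ₆ : (0,∞) → ℂ, |M₆(ψ₁,…,ψ₆)| ≤ C ‖w₁₂·ψ₁ψ₂‖_{L¹} ‖w₃₄·ψ₃ψ₄‖_{L¹} ‖w₅₆·ψ₅ψ₆‖_{L¹} whenever the right-hand side is finite. -/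
/-!
Since `w₁₂` is decreasing, `w₁₂(r) |A_θ[ψ₁,ψ₂](r)| ≤ ½ ∫₀^r w₁₂(t) |ψ₁ψ₂|(t) t dt`, which is at most
`‖w₁₂ ψ₁ψ₂‖_{L¹} / 4π`; likewise for `A_θ[ψ₃,ψ₄]`. Writing `r⁻² = w₁₂ w₃₄ w₅₆` in the integrand of
`M₆`, these two factors are bounded uniformly in `r`, and what is left integrates to
`‖w₅₆ ψ₅ψ₆‖_{L¹} / 2π`. Altogether `|M₆| ≤ (32π²)⁻¹ ∏ ‖w ψψ‖_{L¹}`.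
-/

open MeasureTheory Set
open scoped ENNReal

/-- `Re(conj ψ₁ ψ₂)(r)`. -/
noncomputable def Re2 (ψ₁ ψ₂ : ℝ → ℂ) (r : ℝ) : ℝ := ((starRingEnd ℂ) (ψ₁ r) * ψ₂ r).re

/-- `A_θ[ψ₁,ψ₂](r) = -(1/2)∫₀^r Re(conj ψ₁ ψ₂)(r') r' dr'`. -/
noncomputable def Atheta2 (ψ₁ ψ₂ : ℝ → ℂ) (r : ℝ) : ℝ :=
  -(1/2) * ∫ t in (0:ℝ)..r, Re2 ψ₁ ψ₂ t * t

/-- `M₆(ψ₁,…,ψ₆) = (1/2)·2π∫₀^∞ r^{-2} A_θ[ψ₁,ψ₂] A_θ[ψ₃,ψ₄] Re(conj ψ₅ ψ₆) r dr`. -/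
noncomputable def M6 (ψ₁ ψ₂ ψ₃ ψ₄ ψ₅ ψ₆ : ℝ → ℂ) : ℝ :=
  (1/2) * (2 * Real.pi * ∫ r in Set.Ioi (0:ℝ),
    (r ^ 2)⁻¹ * Atheta2 ψ₁ ψ₂ r * Atheta2 ψ₃ ψ₄ r * Re2 ψ₅ ψ₆ r * r)

open Real

noncomputable def radialL1 (f : ℝ → ℂ) : ℝ≥0∞ :=
  ∫⁻ t in Ioi 0, ENNReal.ofReal (‖f t‖ * t)

theorem eLpNorm_one_rmeas (f : ℝ → ℂ) :
    eLpNorm f 1 rmeas = ENNReal.ofReal (2 * π) * radialL1 f := by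
  rw [eLpNorm_one_eq_lintegral_enorm, rmeas,
    lintegral_withDensity_eq_lintegral_mul_non_measurable _ (by fun_prop)
      (.of_forall fun _ => ENNReal.ofReal_lt_top),
    radialL1, ← lintegral_const_mul' _ _ ENNReal.ofReal_ne_top]
  refine lintegral_congr fun t => ?_
  rw [Pi.mul_apply, ← ofReal_norm, ← ENNReal.ofReal_mul' (norm_nonneg _),
    ← ENNReal.ofReal_mul (by positivity)]
  ring_nf

theorem ofReal_abs_integral_le {α : Type*} [MeasurableSpace α] (μ : Measure α) (f : α → ℝ) :
    ENNReal.ofReal |∫ a, f a ∂μ| ≤ ∫⁻ a, ENNReal.ofReal |f a| ∂μ := by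
  simpa only [Real.enorm_eq_ofReal_abs] using enorm_integral_le_lintegral_enorm f

theorem abs_Re2_le (ψ₁ ψ₂ : ℝ → ℂ) (r : ℝ) : |Re2 ψ₁ ψ₂ r| ≤ ‖ψ₁ r * ψ₂ r‖ := by
  calc |Re2 ψ₁ ψ₂ r| ≤ ‖(starRingEnd ℂ) (ψ₁ r) * ψ₂ r‖ := Complex.abs_re_le_norm _
    _ = ‖ψ₁ r * ψ₂ r‖ := by rw [norm_mul, Complex.norm_conj, norm_mul]

theorem mul_abs_Re2_le_norm_weight_mul (w : ℝ → ℝ) (ψ₁ ψ₂ : ℝ → ℂ) (t : ℝ) :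
    w t * |Re2 ψ₁ ψ₂ t| ≤ ‖(w t : ℂ) * (ψ₁ t * ψ₂ t)‖ := by
  rw [norm_mul, Complex.norm_real, Real.norm_eq_abs]
  exact mul_le_mul (le_abs_self _) (abs_Re2_le ψ₁ ψ₂ t) (abs_nonneg _) (abs_nonneg _)

theorem ofReal_mul_abs_Atheta2_le {w : ℝ → ℝ} (hw : AntitoneOn w (Ioi 0)) (ψ₁ ψ₂ : ℝ → ℂ)
    {r : ℝ} (hr : 0 < r) (hwr : 0 ≤ w r) :
    ENNReal.ofReal (w r * |Atheta2 ψ₁ ψ₂ r|) ≤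
      ENNReal.ofReal 2⁻¹ * radialL1 (fun t => (w t : ℂ) * (ψ₁ t * ψ₂ t)) := by
  have hA : w r * |Atheta2 ψ₁ ψ₂ r| = 2⁻¹ * |∫ t in Ioc 0 r, w r * (Re2 ψ₁ ψ₂ t * t)| := by
    rw [Atheta2, intervalIntegral.integral_of_le hr.le, integral_const_mul, abs_mul, abs_mul,
      abs_of_nonneg hwr]
    norm_num
    ring
  have hpt : ∀ t ∈ Ioc 0 r, ENNReal.ofReal |w r * (Re2 ψ₁ ψ₂ t * t)| ≤
      ENNReal.ofReal (‖(w t : ℂ) * (ψ₁ t * ψ₂ t)‖ * t) := by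
    rintro t ⟨ht, htr⟩
    have hwt : w r ≤ w t := hw ht (ht.trans_le htr) htr
    rw [abs_mul, abs_mul, abs_of_nonneg hwr, abs_of_pos ht, ← mul_assoc]
    gcongr
    exact (mul_le_mul_of_nonneg_right hwt (abs_nonneg _)).trans
      (mul_abs_Re2_le_norm_weight_mul w ψ₁ ψ₂ t)
  calc ENNReal.ofReal (w r * |Atheta2 ψ₁ ψ₂ r|)
      = ENNReal.ofReal 2⁻¹ * ENNReal.ofReal |∫ t in Ioc 0 r, w r * (Re2 ψ₁ ψ₂ t * t)| := by
        rw [hA, ENNReal.ofReal_mul (by norm_num)]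
    _ ≤ ENNReal.ofReal 2⁻¹ * ∫⁻ t in Ioc 0 r, ENNReal.ofReal |w r * (Re2 ψ₁ ψ₂ t * t)| := by
        gcongr
        exact ofReal_abs_integral_le _ _
    _ ≤ ENNReal.ofReal 2⁻¹ * ∫⁻ t in Ioc 0 r, ENNReal.ofReal (‖(w t : ℂ) * (ψ₁ t * ψ₂ t)‖ * t) := by
        gcongr 1
        exact setLIntegral_mono' measurableSet_Ioc hpt
    _ ≤ ENNReal.ofReal 2⁻¹ * radialL1 (fun t => (w t : ℂ) * (ψ₁ t * ψ₂ t)) := by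
        gcongr 1
        exact lintegral_mono_set Ioc_subset_Ioi_self

theorem ofReal_abs_M6_integrand_le {w₁₂ w₃₄ w₅₆ : ℝ → ℝ} (hw₁₂ : AntitoneOn w₁₂ (Ioi 0))
    (hw₃₄ : AntitoneOn w₃₄ (Ioi 0)) (ψ₁ ψ₂ ψ₃ ψ₄ ψ₅ ψ₆ : ℝ → ℂ) {r : ℝ} (hr : 0 < r)
    (h₁₂ : 0 ≤ w₁₂ r) (h₃₄ : 0 ≤ w₃₄ r) (hprod : w₁₂ r * w₃₄ r * w₅₆ r = (r ^ 2)⁻¹) :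
    ENNReal.ofReal |(r ^ 2)⁻¹ * Atheta2 ψ₁ ψ₂ r * Atheta2 ψ₃ ψ₄ r * Re2 ψ₅ ψ₆ r * r| ≤
      ENNReal.ofReal 2⁻¹ * radialL1 (fun t => (w₁₂ t : ℂ) * (ψ₁ t * ψ₂ t)) *
        (ENNReal.ofReal 2⁻¹ * radialL1 (fun t => (w₃₄ t : ℂ) * (ψ₃ t * ψ₄ t))) *
        ENNReal.ofReal (‖(w₅₆ r : ℂ) * (ψ₅ r * ψ₆ r)‖ * r) := by
  have hsplit : |(r ^ 2)⁻¹ * Atheta2 ψ₁ ψ₂ r * Atheta2 ψ₃ ψ₄ r * Re2 ψ₅ ψ₆ r * r| =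
      w₁₂ r * |Atheta2 ψ₁ ψ₂ r| * (w₃₄ r * |Atheta2 ψ₃ ψ₄ r|) * (w₅₆ r * |Re2 ψ₅ ψ₆ r| * r) := by
    rw [abs_mul, abs_mul, abs_mul, abs_mul, abs_of_pos (by positivity), abs_of_pos hr, ← hprod]
    ring
  rw [hsplit, ENNReal.ofReal_mul (by positivity), ENNReal.ofReal_mul (by positivity)]
  gcongr
  · exact ofReal_mul_abs_Atheta2_le hw₁₂ ψ₁ ψ₂ hr h₁₂
  · exact ofReal_mul_abs_Atheta2_le hw₃₄ ψ₃ ψ₄ hr h₃₄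
  · exact mul_abs_Re2_le_norm_weight_mul w₅₆ ψ₅ ψ₆ r

theorem ofReal_abs_M6_le {w₁₂ w₃₄ w₅₆ : ℝ → ℝ} (hw₁₂ : AntitoneOn w₁₂ (Ioi 0))
    (hw₃₄ : AntitoneOn w₃₄ (Ioi 0)) (hw₅₆ : AEMeasurable w₅₆ (volume.restrict (Ioi 0)))
    (h₁₂ : ∀ r, 0 < r → 0 ≤ w₁₂ r) (h₃₄ : ∀ r, 0 < r → 0 ≤ w₃₄ r)
    (hprod : ∀ r, 0 < r → w₁₂ r * w₃₄ r * w₅₆ r = (r ^ 2)⁻¹)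
    (ψ₁ ψ₂ ψ₃ ψ₄ : ℝ → ℂ) {ψ₅ ψ₆ : ℝ → ℂ} (hψ₅ : Measurable ψ₅) (hψ₆ : Measurable ψ₆) :
    ENNReal.ofReal |M6 ψ₁ ψ₂ ψ₃ ψ₄ ψ₅ ψ₆| ≤
      ENNReal.ofReal (π / 4) * radialL1 (fun t => (w₁₂ t : ℂ) * (ψ₁ t * ψ₂ t)) *
        radialL1 (fun t => (w₃₄ t : ℂ) * (ψ₃ t * ψ₄ t)) *
        radialL1 (fun t => (w₅₆ t : ℂ) * (ψ₅ t * ψ₆ t)) := by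
  set F : ℝ → ℝ := fun r => (r ^ 2)⁻¹ * Atheta2 ψ₁ ψ₂ r * Atheta2 ψ₃ ψ₄ r * Re2 ψ₅ ψ₆ r * r
  set L₁₂ := radialL1 (fun t => (w₁₂ t : ℂ) * (ψ₁ t * ψ₂ t))
  set L₃₄ := radialL1 (fun t => (w₃₄ t : ℂ) * (ψ₃ t * ψ₄ t))
  set g : ℝ → ℝ≥0∞ := fun r => ENNReal.ofReal (‖(w₅₆ r : ℂ) * (ψ₅ r * ψ₆ r)‖ * r)
  have hM6 : M6 ψ₁ ψ₂ ψ₃ ψ₄ ψ₅ ψ₆ = π * ∫ r in Ioi 0, F r := by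
    rw [M6]
    ring
  have hg : AEMeasurable g (volume.restrict (Ioi 0)) := by fun_prop
  have hK : ENNReal.ofReal π * (ENNReal.ofReal 2⁻¹ * ENNReal.ofReal 2⁻¹) =
      ENNReal.ofReal (π / 4) := by
    rw [← ENNReal.ofReal_mul (by norm_num), ← ENNReal.ofReal_mul pi_pos.le]
    ring_nf
  calc ENNReal.ofReal |M6 ψ₁ ψ₂ ψ₃ ψ₄ ψ₅ ψ₆|
      = ENNReal.ofReal π * ENNReal.ofReal |∫ r in Ioi 0, F r| := by
        rw [hM6, abs_mul, abs_of_pos pi_pos, ENNReal.ofReal_mul pi_pos.le]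
    _ ≤ ENNReal.ofReal π * ∫⁻ r in Ioi 0, ENNReal.ofReal |F r| := by
        gcongr
        exact ofReal_abs_integral_le _ _
    _ ≤ ENNReal.ofReal π * ∫⁻ r in Ioi 0,
          ENNReal.ofReal 2⁻¹ * L₁₂ * (ENNReal.ofReal 2⁻¹ * L₃₄) * g r := by
        gcongr 1
        exact setLIntegral_mono' measurableSet_Ioi fun r hr =>
          ofReal_abs_M6_integrand_le hw₁₂ hw₃₄ ψ₁ ψ₂ ψ₃ ψ₄ ψ₅ ψ₆ hr (h₁₂ r hr) (h₃₄ r hr)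
            (hprod r hr)
    _ = ENNReal.ofReal (π / 4) * L₁₂ * L₃₄ * ∫⁻ r in Ioi 0, g r := by
        rw [lintegral_const_mul'' _ hg, ← hK]
        ring

/-- Duality estimate (weighted `L¹`-type) for `M₆`. -/
theorem duality_estimate_M6_weighted :
    ∃ C : ℝ, 0 < C ∧
      ∀ w₁₂ w₃₄ w₅₆ : ℝ → ℝ,
        (∀ r : ℝ, 0 < r → 0 < w₁₂ r) → (∀ r : ℝ, 0 < r → 0 < w₃₄ r) →
        (∀ r : ℝ, 0 < r → 0 < w₅₆ r) →
        (∀ r s : ℝ, 0 < r → r ≤ s → w₁₂ s ≤ w₁₂ r) →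
        (∀ r s : ℝ, 0 < r → r ≤ s → w₃₄ s ≤ w₃₄ r) →
        (∀ r s : ℝ, 0 < r → r ≤ s → w₅₆ s ≤ w₅₆ r) →
        (∀ r : ℝ, 0 < r → w₁₂ r * w₃₄ r * w₅₆ r = (r ^ 2)⁻¹) →
        ∀ ψ₁ ψ₂ ψ₃ ψ₄ ψ₅ ψ₆ : ℝ → ℂ,
          Measurable ψ₁ → Measurable ψ₂ → Measurable ψ₃ → Measurable ψ₄ →
          Measurable ψ₅ → Measurable ψ₆ →
          ENNReal.ofReal |M6 ψ₁ ψ₂ ψ₃ ψ₄ ψ₅ ψ₆| ≤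
            ENNReal.ofReal C
              * eLpNorm (fun r => ((w₁₂ r : ℝ) : ℂ) * (ψ₁ r * ψ₂ r)) 1 rmeas
              * eLpNorm (fun r => ((w₃₄ r : ℝ) : ℂ) * (ψ₃ r * ψ₄ r)) 1 rmeas
              * eLpNorm (fun r => ((w₅₆ r : ℝ) : ℂ) * (ψ₅ r * ψ₆ r)) 1 rmeas := by
  refine ⟨(32 * π ^ 2)⁻¹, by positivity, ?_⟩
  intro w₁₂ w₃₄ w₅₆ h₁₂ h₃₄ _ ha₁₂ ha₃₄ ha₅₆ hprod ψ₁ ψ₂ ψ₃ ψ₄ ψ₅ ψ₆ _ _ _ _ hψ₅ hψ₆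
  have antitoneOn {w : ℝ → ℝ} (h : ∀ r s : ℝ, 0 < r → r ≤ s → w s ≤ w r) :
      AntitoneOn w (Ioi 0) := fun r hr _ _ hrs => h r _ hr hrs
  have hC : ENNReal.ofReal (π / 4) =
      ENNReal.ofReal (32 * π ^ 2)⁻¹ * ENNReal.ofReal (2 * π) ^ 3 := by
    rw [← ENNReal.ofReal_pow (by positivity), ← ENNReal.ofReal_mul (by positivity)]
    congr 1
    field_simp
    ring
  rw [eLpNorm_one_rmeas, eLpNorm_one_rmeas, eLpNorm_one_rmeas]
  refine (ofReal_abs_M6_le (antitoneOn ha₁₂) (antitoneOn ha₃₄)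
    (aemeasurable_restrict_of_antitoneOn measurableSet_Ioi (antitoneOn ha₅₆))
    (fun r hr => (h₁₂ r hr).le) (fun r hr => (h₃₄ r hr).le) hprod ψ₁ ψ₂ ψ₃ ψ₄ hψ₅ hψ₆).trans_eq ?_
  rw [hC]
  ring
end
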